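/- arXiv:0705.0836 — 2 statements merged into one kernel-verified Lean document; each statement's English description precedes it below -/
import Mathlib

section
/- Let φ ∈ C_0^∞ of the unit ball of ℝⁿ with ∫φ = 1, and let φ̂ be its Fourier transform. Then for every k ≥ 0, every h ∈ ℝⁿ with |h| ≤ C (a fixed constant), every t > 0 and ξ ∈ ℝⁿ\{0}: |e^{it ξ·h} − 1 − (i h·tξ) φ̂(2^{-k} t ξ)| / (t|ξ|) ≤ C' min( t|ξ|, 1, 2^k/(t|ξ|) ). -/
set_option maxHeartbeats 1000000


open MeasureTheory Set FourierTransform RealInnerProductSpace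

/-- Pointwise multiplier estimate
`|e^{itξ·h} − 1 − (ih·tξ)φ̂(2^{-k}tξ)| / (t|ξ|) ≤ C' min(t|ξ|, 1, 2^k/(t|ξ|))`. -/
theorem stmt3 {n : ℕ} (Cb : ℝ) (hCb : 0 < Cb)
    (φ : EuclideanSpace ℝ (Fin n) → ℝ)
    (hsmooth : ContDiff ℝ (⊤ : ℕ∞) φ)
    (hsupp : tsupport φ ⊆ Metric.ball 0 1)
    (hint : ∫ x, φ x = 1) :
    ∃ C' : ℝ, 0 < C' ∧ ∀ (k : ℕ) (h ξ : EuclideanSpace ℝ (Fin n)) (t : ℝ),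
      ‖h‖ ≤ Cb → 0 < t → ξ ≠ 0 →
      ‖Complex.exp (Complex.I * ((t * ⟪ξ, h⟫ : ℝ) : ℂ)) - 1 -
          Complex.I * ((⟪h, t • ξ⟫ : ℝ) : ℂ) *
            𝓕 (fun x => (φ x : ℂ)) (((2:ℝ)^(-(k:ℤ))) • (t • ξ))‖ / (t * ‖ξ‖)
        ≤ C' * min (t * ‖ξ‖) (min 1 ((2:ℝ)^(k:ℕ) / (t * ‖ξ‖))) := by
  classical
  set f : EuclideanSpace ℝ (Fin n) → ℂ := fun x => (φ x : ℂ) with hf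
  -- compact support
  have hsupp_eq : tsupport f = tsupport φ := by
    have : Function.support f = Function.support φ := by
      ext x; simp [hf]
    unfold tsupport
    rw [this]
  have hφc : HasCompactSupport φ :=
    HasCompactSupport.of_support_subset_isCompact
      (isCompact_closedBall (0 : EuclideanSpace ℝ (Fin n)) 1)
      ((subset_tsupport φ).trans (hsupp.trans Metric.ball_subset_closedBall))
  have hfc : HasCompactSupport f := hφc.comp_left (g := fun r : ℝ => (r:ℂ)) rfl
  have hfsmooth : ContDiff ℝ (⊤ : ℕ∞) f := Complex.ofRealCLM.contDiff.comp hsmooth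
  have hfsupp : tsupport f ⊆ Metric.ball 0 1 := by rw [hsupp_eq]; exact hsupp
  -- build a Schwartz map
  let ψ : SchwartzMap (EuclideanSpace ℝ (Fin n)) ℂ :=
    { toFun := f
      smooth' := hfsmooth.of_le (by simp)
      decay' := by
        intro p m
        obtain ⟨C, hC⟩ := (hfc.iteratedFDeriv m).exists_bound_of_continuous
          (hfsmooth.continuous_iteratedFDeriv (by exact_mod_cast le_top))
        refine ⟨max C 0, fun x => ?_⟩
        by_cases hx : x ∈ tsupport f
        · have hx1 : ‖x‖ ≤ 1 := by
            have := hfsupp hx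
            rw [mem_ball_zero_iff] at this
            exact this.le
          calc ‖x‖ ^ p * ‖iteratedFDeriv ℝ m f x‖
              ≤ 1 * ‖iteratedFDeriv ℝ m f x‖ := by
                gcongr
                exact pow_le_one₀ (norm_nonneg x) hx1
            _ = ‖iteratedFDeriv ℝ m f x‖ := one_mul _
            _ ≤ max C 0 := (hC x).trans (le_max_left _ _)
        · have hz : iteratedFDeriv ℝ m f x = 0 := by
            by_contra hne
            exact hx (tsupport_iteratedFDeriv_subset m (subset_closure hne))
          rw [hz]
          simp [le_max_right C 0] }
  let Φ : SchwartzMap (EuclideanSpace ℝ (Fin n)) ℂ := SchwartzMap.fourierTransformCLM ℝ ψ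
  have hΦeq : ∀ w, Φ w = 𝓕 f w := fun w => rfl
  -- value at zero
  have hΦ0 : Φ 0 = 1 := by
    rw [hΦeq, Real.fourier_eq]
    simp only [inner_zero_right, neg_zero, AddChar.map_zero_eq_one, one_smul]
    have : (∫ v, f v) = ((∫ v, φ v : ℝ) : ℂ) := integral_ofReal
    rw [hf] at this
    rw [this, hint, Complex.ofReal_one]
  -- bounds from Schwartz decay
  obtain ⟨B0, hB0pos, hB0⟩ := Φ.decay 0 0
  obtain ⟨B1, hB1pos, hB1⟩ := Φ.decay 1 0
  obtain ⟨L, hLpos, hL⟩ := Φ.decay 0 1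
  have hB0' : ∀ w, ‖Φ w‖ ≤ B0 := fun w => by
    have := hB0 w
    rwa [pow_zero, one_mul, norm_iteratedFDeriv_zero] at this
  have hB1' : ∀ w, ‖w‖ * ‖Φ w‖ ≤ B1 := fun w => by
    have := hB1 w
    rwa [pow_one, norm_iteratedFDeriv_zero] at this
  have hLf : ∀ w, ‖fderiv ℝ (⇑Φ) w‖ ≤ L := by
    intro w
    have h1 := hL w
    rw [pow_zero, one_mul] at h1
    calc ‖fderiv ℝ (⇑Φ) w‖ = ‖iteratedFDeriv ℝ 0 (fderiv ℝ (⇑Φ)) w‖ :=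
          (norm_iteratedFDeriv_zero).symm
      _ = ‖iteratedFDeriv ℝ (0 + 1) (⇑Φ) w‖ := norm_iteratedFDeriv_fderiv
      _ ≤ L := h1
  -- Lipschitz bound at 0
  have hLip : ∀ w : EuclideanSpace ℝ (Fin n), ‖Φ w - 1‖ ≤ L * ‖w‖ := by
    intro w
    have := Convex.norm_image_sub_le_of_norm_fderiv_le (f := ⇑Φ) (s := Set.univ)
      (fun x _ => (Φ.differentiable).differentiableAt) (fun x _ => hLf x)
      convex_univ (Set.mem_univ (0 : EuclideanSpace ℝ (Fin n))) (Set.mem_univ w)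
    rw [hΦ0] at this
    simpa using this
  refine ⟨3 * Cb ^ 2 + Cb * L + 2 + Cb * B0 + Cb * B1 + 3, by positivity, ?_⟩
  intro k h ξ t hh ht hξ
  set u : ℝ := t * ‖ξ‖ with hu
  have hu0 : 0 < u := mul_pos ht (norm_pos_iff.mpr hξ)
  set s : ℝ := t * ⟪ξ, h⟫ with hsdef
  set η : EuclideanSpace ℝ (Fin n) := ((2:ℝ)^(-(k:ℤ))) • (t • ξ) with hηdef
  have hcoef : (⟪h, t • ξ⟫ : ℝ) = s := by
    rw [real_inner_smul_right, real_inner_comm]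
  have ha0 : (0:ℝ) < (2:ℝ)^(-(k:ℤ)) := by positivity
  have ha1 : ((2:ℝ)^(-(k:ℤ))) ≤ 1 :=
    zpow_le_one_of_nonpos₀ (by norm_num) (by simp)
  have hak : ((2:ℝ)^(-(k:ℤ))) * (2:ℝ)^(k:ℕ) = 1 := by
    rw [← zpow_natCast (2:ℝ) k, ← zpow_add₀ (by norm_num : (2:ℝ) ≠ 0)]
    simp
  have h2k1 : (1:ℝ) ≤ (2:ℝ)^(k:ℕ) := one_le_pow₀ (by norm_num)
  have hηnorm : ‖η‖ = (2:ℝ)^(-(k:ℤ)) * u := by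
    rw [hηdef, norm_smul, norm_smul]
    rw [Real.norm_eq_abs, Real.norm_eq_abs, abs_of_pos ha0, abs_of_pos ht]
  have hηpos : 0 < ‖η‖ := by rw [hηnorm]; positivity
  have hs : |s| ≤ Cb * u := by
    rw [hsdef, abs_mul, abs_of_pos ht]
    calc t * |⟪ξ, h⟫| ≤ t * (‖ξ‖ * ‖h‖) := by
          gcongr; exact abs_real_inner_le_norm ξ h
      _ ≤ t * (‖ξ‖ * Cb) := by gcongr
      _ = Cb * u := by rw [hu]; ring
  set z : ℂ := Complex.I * (s : ℂ) with hzdef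
  have hznorm : ‖z‖ = |s| := by
    rw [hzdef, norm_mul, Complex.norm_I, one_mul, Complex.norm_real, Real.norm_eq_abs]
  have hexpz : ‖Complex.exp z‖ = 1 := by
    rw [hzdef, mul_comm]
    rw [Complex.norm_exp_ofReal_mul_I]
  -- the expression
  have hX : Complex.exp (Complex.I * ((t * ⟪ξ, h⟫ : ℝ) : ℂ)) - 1 -
      Complex.I * ((⟪h, t • ξ⟫ : ℝ) : ℂ) * 𝓕 (fun x => (φ x : ℂ)) (((2:ℝ)^(-(k:ℤ))) • (t • ξ))
      = Complex.exp z - 1 - z * Φ η := by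
    rw [hcoef, hzdef, ← hηdef, ← hf, ← hΦeq, ← hsdef]
  rw [hX]
  set N : ℝ := ‖Complex.exp z - 1 - z * Φ η‖ with hNdef
  -- bound (exp z - 1 - z)
  have hP : ‖Complex.exp z - 1 - z‖ ≤ 3 * s ^ 2 := by
    rcases le_or_gt (|s|) 1 with hs1 | hs1
    · have := Complex.norm_exp_sub_one_sub_id_le (x := z) (by rwa [hznorm])
      rw [hznorm] at this
      nlinarith [sq_abs s]
    · have h1 : ‖Complex.exp z - 1 - z‖ ≤ ‖Complex.exp z‖ + ‖(1:ℂ)‖ + ‖z‖ := by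
        calc ‖Complex.exp z - 1 - z‖ ≤ ‖Complex.exp z - 1‖ + ‖z‖ := norm_sub_le _ _
          _ ≤ ‖Complex.exp z‖ + ‖(1:ℂ)‖ + ‖z‖ := by gcongr; exact norm_sub_le _ _
      rw [hexpz, norm_one, hznorm] at h1
      nlinarith [sq_abs s, abs_nonneg s]
  have hE1 : ‖Complex.exp z - 1‖ ≤ 2 := by
    calc ‖Complex.exp z - 1‖ ≤ ‖Complex.exp z‖ + ‖(1:ℂ)‖ := norm_sub_le _ _
      _ = 2 := by rw [hexpz, norm_one]; norm_num
  have hL0 : 0 ≤ L := le_of_lt hLpos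
  have hB00 : 0 ≤ B0 := le_of_lt hB0pos
  have hB10 : 0 ≤ B1 := le_of_lt hB1pos
  -- bound (a): N ≤ (3 Cb² + Cb L) u²
  have hNa : N ≤ (3 * Cb ^ 2 + Cb * L) * (u * u) := by
    have hdecomp : Complex.exp z - 1 - z * Φ η
        = (Complex.exp z - 1 - z) + z * (1 - Φ η) := by ring
    have h2 : ‖z * (1 - Φ η)‖ ≤ |s| * (L * ‖η‖) := by
      rw [norm_mul, hznorm]
      exact mul_le_mul_of_nonneg_left (by rw [norm_sub_rev]; exact hLip η) (abs_nonneg s)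
    have h3 : |s| * (L * ‖η‖) ≤ Cb * L * (u * u) := by
      rw [hηnorm]
      calc |s| * (L * ((2:ℝ)^(-(k:ℤ)) * u)) ≤ (Cb * u) * (L * (1 * u)) := by
            gcongr
        _ = Cb * L * (u * u) := by ring
    have h4 : 3 * s ^ 2 ≤ 3 * Cb ^ 2 * (u * u) := by nlinarith [sq_abs s, abs_nonneg s]
    calc N = ‖(Complex.exp z - 1 - z) + z * (1 - Φ η)‖ := by rw [hNdef, hdecomp]
      _ ≤ ‖Complex.exp z - 1 - z‖ + ‖z * (1 - Φ η)‖ := norm_add_le _ _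
      _ ≤ 3 * s ^ 2 + |s| * (L * ‖η‖) := add_le_add hP h2
      _ ≤ 3 * Cb ^ 2 * (u * u) + Cb * L * (u * u) := add_le_add h4 h3
      _ = (3 * Cb ^ 2 + Cb * L) * (u * u) := by ring
  -- bound (b): N ≤ 2 + Cb B0 u
  have hNb : N ≤ 2 + Cb * B0 * u := by
    calc N ≤ ‖Complex.exp z - 1‖ + ‖z * Φ η‖ := norm_sub_le _ _
      _ ≤ 2 + |s| * B0 := by
          refine add_le_add hE1 ?_
          rw [norm_mul, hznorm]
          exact mul_le_mul_of_nonneg_left (hB0' η) (abs_nonneg s)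
      _ ≤ 2 + (Cb * u) * B0 := by gcongr
      _ = 2 + Cb * B0 * u := by ring
  -- bound (c): N ≤ (2 + Cb B1) 2^k
  have hNc : N ≤ (2 + Cb * B1) * (2:ℝ)^(k:ℕ) := by
    have hΦη : ‖Φ η‖ ≤ B1 / ‖η‖ := by
      rw [le_div_iff₀ hηpos]
      calc ‖Φ η‖ * ‖η‖ = ‖η‖ * ‖Φ η‖ := by ring
        _ ≤ B1 := hB1' η
    have h5 : |s| * ‖Φ η‖ ≤ Cb * B1 * (2:ℝ)^(k:ℕ) := by
      calc |s| * ‖Φ η‖ ≤ (Cb * u) * (B1 / ‖η‖) :=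
            mul_le_mul hs hΦη (norm_nonneg _) (by positivity)
        _ = Cb * B1 * (2:ℝ)^(k:ℕ) := by
            have h2a : ((2:ℝ)^(-(k:ℤ))) = ((2:ℝ)^(k:ℕ))⁻¹ := by
              rw [← zpow_natCast (2:ℝ) k, ← zpow_neg]
            have hune : u ≠ 0 := hu0.ne'
            rw [hηnorm, h2a]
            field_simp
    calc N ≤ ‖Complex.exp z - 1‖ + ‖z * Φ η‖ := norm_sub_le _ _
      _ ≤ 2 + |s| * ‖Φ η‖ := by
          gcongr
          rw [norm_mul, hznorm]
      _ ≤ 2 + Cb * B1 * (2:ℝ)^(k:ℕ) := by gcongr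
      _ ≤ 2 * (2:ℝ)^(k:ℕ) + Cb * B1 * (2:ℝ)^(k:ℕ) := by nlinarith
      _ = (2 + Cb * B1) * (2:ℝ)^(k:ℕ) := by ring
  -- conclude
  rw [div_le_iff₀ hu0]
  rcases min_cases u (min 1 ((2:ℝ)^(k:ℕ) / u)) with ⟨hmeq, hle⟩ | ⟨hmeq, hle⟩
  · rw [hmeq]
    calc N ≤ (3 * Cb ^ 2 + Cb * L) * (u * u) := hNa
      _ ≤ (3 * Cb ^ 2 + Cb * L + 2 + Cb * B0 + Cb * B1 + 3) * (u * u) := by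
          refine mul_le_mul_of_nonneg_right ?_ (by positivity)
          nlinarith [sq_nonneg Cb, mul_nonneg hCb.le hB00, mul_nonneg hCb.le hB10]
      _ = (3 * Cb ^ 2 + Cb * L + 2 + Cb * B0 + Cb * B1 + 3) * u * u := by ring
  · rw [hmeq]
    rcases min_cases (1:ℝ) ((2:ℝ)^(k:ℕ) / u) with ⟨hmeq2, hle2⟩ | ⟨hmeq2, hle2⟩
    · rw [hmeq2] at hle ⊢
      calc N ≤ 2 + Cb * B0 * u := hNb
        _ ≤ 2 * u + Cb * B0 * u := by nlinarith [hle, mul_nonneg hCb.le hB00]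
        _ = (2 + Cb * B0) * u := by ring
        _ ≤ (3 * Cb ^ 2 + Cb * L + 2 + Cb * B0 + Cb * B1 + 3) * u := by
            refine mul_le_mul_of_nonneg_right ?_ hu0.le
            nlinarith [sq_nonneg Cb, mul_nonneg hCb.le hL0, mul_nonneg hCb.le hB10]
        _ = (3 * Cb ^ 2 + Cb * L + 2 + Cb * B0 + Cb * B1 + 3) * 1 * u := by ring
    · rw [hmeq2]
      have hrw : (3 * Cb ^ 2 + Cb * L + 2 + Cb * B0 + Cb * B1 + 3) * ((2:ℝ)^(k:ℕ) / u) * u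
          = (3 * Cb ^ 2 + Cb * L + 2 + Cb * B0 + Cb * B1 + 3) * (2:ℝ)^(k:ℕ) := by
        field_simp
      rw [hrw]
      calc N ≤ (2 + Cb * B1) * (2:ℝ)^(k:ℕ) := hNc
        _ ≤ (3 * Cb ^ 2 + Cb * L + 2 + Cb * B0 + Cb * B1 + 3) * (2:ℝ)^(k:ℕ) := by
            refine mul_le_mul_of_nonneg_right ?_ (by positivity)
            nlinarith [sq_nonneg Cb, mul_nonneg hCb.le hL0, mul_nonneg hCb.le hB00]
end

section
/- Let (F_s)_{s>0} be a family in L²(ℝⁿ) (jointly measurable in (x,s)), and for k ∈ ℤ set t_k = 2^{k−1}. Suppose ∫₀^∞ ‖s ∂_s F_s‖²_{L²} ds/s < ∞ in the sense that G(x,s) := ∂_s F_s(x) exists and s G(·,s) has finite square function norm. Then Σ_{k=−∞}^∞ ∫_{2^{k−1}}^{2^{k+2}} ∫_{ℝⁿ} |F_t(x) − F_{t_k}(x)|² dx dt/t ≤ C ∫₀^∞ ∫_{ℝⁿ} |s ∂_s F_s(x)|² dx ds/s. -/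
/-!
Fix a window `(a, 8a)` with `a = t_k`. For `t` in it, the fundamental theorem of calculus and
Cauchy–Schwarz give, pointwise in `x`, `|F_t x - F_a x|² ≤ 7a ∫ₐ^{8a} |∂ₛF_s x|² ds`. Integrating in
`x` and in `dt/t ≤ dt/a` over the window, and using `a ≤ s` there, bounds the window's term by
`49 ∫ₐ^{8a} ‖∂ₛF_s‖² s ds`. Every `s > 0` lies in at most three windows, whence `C = 3 · 49`.
-/

open MeasureTheory Set ENNReal Function

theorem sq_lintegral_le_lintegral_sq_mul_measure_univ {α : Type*} [MeasurableSpace α]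
    (μ : Measure α) {f : α → ℝ≥0∞} (hf : AEMeasurable f μ) :
    (∫⁻ a, f a ∂μ) ^ 2 ≤ (∫⁻ a, f a ^ 2 ∂μ) * μ univ := by
  have h := ENNReal.lintegral_mul_le_Lp_mul_Lq μ Real.HolderConjugate.two_two hf
    (aemeasurable_const (b := (1 : ℝ≥0∞)))
  simp only [Pi.mul_apply, mul_one, ENNReal.one_rpow, lintegral_one] at h
  calc (∫⁻ a, f a ∂μ) ^ 2
      ≤ ((∫⁻ a, f a ^ (2 : ℝ) ∂μ) ^ (1 / 2 : ℝ) * μ univ ^ (1 / 2 : ℝ)) ^ 2 := by gcongr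
    _ = (∫⁻ a, f a ^ 2 ∂μ) * μ univ := by
        simp only [mul_pow, ← ENNReal.rpow_natCast, ← ENNReal.rpow_mul]
        norm_num

section

variable {E : Type*} [NormedAddCommGroup E] [NormedSpace ℝ E] [CompleteSpace E]

theorem enorm_sub_le_setLIntegral_enorm_of_hasDerivAt {f g : ℝ → E} {a t : ℝ} (hat : a ≤ t)
    (hf : ∀ s ∈ Icc a t, HasDerivAt f (g s) s)
    (hg : AEStronglyMeasurable g (volume.restrict (Ioc a t))) :
    ‖f t - f a‖ₑ ≤ ∫⁻ s in Ioc a t, ‖g s‖ₑ := by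
  by_cases hfin : ∫⁻ s in Ioc a t, ‖g s‖ₑ = ∞
  · simp [hfin]
  have hint : IntervalIntegrable g volume a t :=
    (intervalIntegrable_iff_integrableOn_Ioc_of_le hat).2 ⟨hg, lt_top_iff_ne_top.2 hfin⟩
  rw [← intervalIntegral.integral_eq_sub_of_hasDerivAt (by rwa [uIcc_of_le hat]) hint,
    intervalIntegral.integral_of_le hat]
  exact enorm_integral_le_lintegral_enorm g

theorem enorm_sub_sq_le_setLIntegral_enorm_sq_mul_of_hasDerivAt {f g : ℝ → E} {a t b : ℝ}
    (hat : a ≤ t) (htb : t < b) (hf : ∀ s ∈ Icc a t, HasDerivAt f (g s) s)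
    (hg : AEStronglyMeasurable g (volume.restrict (Ioo a b))) :
    ‖f t - f a‖ₑ ^ 2 ≤ (∫⁻ s in Ioo a b, ‖g s‖ₑ ^ 2) * ENNReal.ofReal (b - a) := by
  have hsub : Ioc a t ⊆ Ioo a b := Ioc_subset_Ioo_right htb
  calc ‖f t - f a‖ₑ ^ 2 ≤ (∫⁻ s in Ioc a t, ‖g s‖ₑ) ^ 2 := by
        gcongr; exact enorm_sub_le_setLIntegral_enorm_of_hasDerivAt hat hf (hg.mono_set hsub)
    _ ≤ (∫⁻ s in Ioo a b, ‖g s‖ₑ) ^ 2 := by gcongr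
    _ ≤ (∫⁻ s in Ioo a b, ‖g s‖ₑ ^ 2) * volume (Ioo a b) := by
        simpa using sq_lintegral_le_lintegral_sq_mul_measure_univ _ hg.enorm
    _ = (∫⁻ s in Ioo a b, ‖g s‖ₑ ^ 2) * ENNReal.ofReal (b - a) := by rw [Real.volume_Ioo]

variable {X : Type*} [MeasurableSpace X] {μ : Measure X} [SFinite μ] {F G : ℝ → X → E}

theorem lintegral_enorm_sub_sq_le_of_hasDerivAt {a t b : ℝ} (hat : a ≤ t) (htb : t < b)
    (hG : StronglyMeasurable (uncurry G))
    (hF : ∀ x, ∀ s ∈ Icc a t, HasDerivAt (F · x) (G s x) s) :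
    ∫⁻ x, ‖F t x - F a x‖ₑ ^ 2 ∂μ
      ≤ ENNReal.ofReal (b - a) * ∫⁻ s in Ioo a b, (∫⁻ x, ‖G s x‖ₑ ^ 2 ∂μ) := by
  have hGx : ∀ x, AEStronglyMeasurable (G · x) (volume.restrict (Ioo a b)) := fun x =>
    (hG.comp_measurable (measurable_id.prodMk measurable_const)).aestronglyMeasurable
  calc ∫⁻ x, ‖F t x - F a x‖ₑ ^ 2 ∂μ
      ≤ ∫⁻ x, (∫⁻ s in Ioo a b, ‖G s x‖ₑ ^ 2) * ENNReal.ofReal (b - a) ∂μ :=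
        lintegral_mono fun x =>
          enorm_sub_sq_le_setLIntegral_enorm_sq_mul_of_hasDerivAt hat htb (hF x) (hGx x)
    _ = ENNReal.ofReal (b - a) * ∫⁻ x, (∫⁻ s in Ioo a b, ‖G s x‖ₑ ^ 2) ∂μ := by
        rw [lintegral_mul_const' _ _ ofReal_ne_top, mul_comm]
    _ = ENNReal.ofReal (b - a) * ∫⁻ s in Ioo a b, (∫⁻ x, ‖G s x‖ₑ ^ 2 ∂μ) := by
        rw [lintegral_lintegral_swap (f := fun x s => ‖G s x‖ₑ ^ 2)
          ((hG.enorm.pow_const 2).comp measurable_swap).aemeasurable]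

theorem setLIntegral_lintegral_enorm_sub_sq_div_le {a c : ℝ} (ha : 0 < a)
    (hG : StronglyMeasurable (uncurry G))
    (hF : ∀ x, ∀ s ∈ Ico a (c * a), HasDerivAt (F · x) (G s x) s) :
    ∫⁻ t in Ioo a (c * a), (∫⁻ x, ‖F t x - F a x‖ₑ ^ 2 ∂μ) / ENNReal.ofReal t
      ≤ ENNReal.ofReal (c - 1) ^ 2 *
          ∫⁻ s in Ioo a (c * a), (∫⁻ x, ‖G s x‖ₑ ^ 2 ∂μ) * ENNReal.ofReal s := by
  set A := ENNReal.ofReal a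
  set K := ∫⁻ s in Ioo a (c * a), (∫⁻ x, ‖G s x‖ₑ ^ 2 ∂μ)
  have hL : ENNReal.ofReal (c * a - a) = ENNReal.ofReal (c - 1) * A := by
    rw [← ofReal_mul' ha.le, sub_one_mul]
  have hAK : A * K ≤ ∫⁻ s in Ioo a (c * a), (∫⁻ x, ‖G s x‖ₑ ^ 2 ∂μ) * ENNReal.ofReal s := by
    rw [← lintegral_const_mul' _ _ ofReal_ne_top]
    refine setLIntegral_mono' measurableSet_Ioo fun s hs => ?_
    rw [mul_comm]
    gcongr
    exact hs.1.le
  calc ∫⁻ t in Ioo a (c * a), (∫⁻ x, ‖F t x - F a x‖ₑ ^ 2 ∂μ) / ENNReal.ofReal t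
      ≤ ∫⁻ _ in Ioo a (c * a), ENNReal.ofReal (c * a - a) * K / A :=
        setLIntegral_mono' measurableSet_Ioo fun t ht => ENNReal.div_le_div
          (lintegral_enorm_sub_sq_le_of_hasDerivAt ht.1.le ht.2 hG
            fun x s hs => hF x s ⟨hs.1, hs.2.trans_lt ht.2⟩)
          (ofReal_le_ofReal ht.1.le)
    _ = ENNReal.ofReal (c - 1) ^ 2 * (A * K) * (A * A⁻¹) := by
        rw [setLIntegral_const, Real.volume_Ioo, div_eq_mul_inv, hL]
        ring
    _ ≤ ENNReal.ofReal (c - 1) ^ 2 *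
          ∫⁻ s in Ioo a (c * a), (∫⁻ x, ‖G s x‖ₑ ^ 2 ∂μ) * ENNReal.ofReal s := by
        rw [ENNReal.mul_inv_cancel (ofReal_pos.2 ha).ne' ofReal_ne_top, mul_one]
        gcongr

end

theorem tsum_indicator_Ioo_two_zpow_le (g : ℝ → ℝ≥0∞) {s : ℝ} (hs : 0 < s) :
    ∑' k : ℤ, (Ioo ((2 : ℝ) ^ (k - 1)) (2 ^ (k + 2))).indicator g s ≤ 3 * g s := by
  set L := Int.log 2 s
  have hL : (2 : ℝ) ^ L ≤ s := by simpa using Int.zpow_log_le_self (R := ℝ) (b := 2) one_lt_two hs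
  have hL' : s < (2 : ℝ) ^ (L + 1) := by simpa using Int.lt_zpow_succ_log_self (R := ℝ) (b := 2) one_lt_two s
  have hsupp : ∀ k ∉ ({L - 1, L, L + 1} : Finset ℤ),
      (Ioo ((2 : ℝ) ^ (k - 1)) (2 ^ (k + 2))).indicator g s = 0 := by
    refine fun k hk => indicator_of_notMem (fun hmem => hk ?_) g
    have h1 : k - 1 < L + 1 := (zpow_lt_zpow_iff_right₀ (one_lt_two (α := ℝ))).1 (hmem.1.trans hL')
    have h2 : L < k + 2 := (zpow_lt_zpow_iff_right₀ (one_lt_two (α := ℝ))).1 (hL.trans_lt hmem.2)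
    simp only [Finset.mem_insert, Finset.mem_singleton]
    omega
  calc ∑' k : ℤ, (Ioo ((2 : ℝ) ^ (k - 1)) (2 ^ (k + 2))).indicator g s
      = ∑ k ∈ {L - 1, L, L + 1}, (Ioo ((2 : ℝ) ^ (k - 1)) (2 ^ (k + 2))).indicator g s :=
        tsum_eq_sum hsupp
    _ ≤ ∑ _k ∈ ({L - 1, L, L + 1} : Finset ℤ), g s :=
        Finset.sum_le_sum fun k _ => indicator_le_self _ _ s
    _ ≤ 3 * g s := by
        rw [Finset.sum_const, nsmul_eq_mul]
        gcongr
        exact_mod_cast Finset.card_le_three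

theorem tsum_setLIntegral_Ioo_two_zpow_le {φ : ℝ → ℝ≥0∞} (hφ : Measurable φ) :
    ∑' k : ℤ, ∫⁻ s in Ioo ((2 : ℝ) ^ (k - 1)) (2 ^ (k + 2)), φ s
      ≤ 3 * ∫⁻ s in Ioi 0, φ s := by
  have hwin : ∀ k : ℤ, Ioo ((2 : ℝ) ^ (k - 1)) (2 ^ (k + 2)) ⊆ Ioi 0 :=
    fun k s hs => lt_trans (by positivity) hs.1
  calc ∑' k : ℤ, ∫⁻ s in Ioo ((2 : ℝ) ^ (k - 1)) (2 ^ (k + 2)), φ s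
      = ∑' k : ℤ, ∫⁻ s in Ioi 0, (Ioo ((2 : ℝ) ^ (k - 1)) (2 ^ (k + 2))).indicator φ s := by
        simp only [lintegral_indicator measurableSet_Ioo,
          Measure.restrict_restrict_of_subset (hwin _)]
    _ = ∫⁻ s in Ioi 0, ∑' k : ℤ, (Ioo ((2 : ℝ) ^ (k - 1)) (2 ^ (k + 2))).indicator φ s :=
        (lintegral_tsum fun k => (hφ.indicator measurableSet_Ioo).aemeasurable).symm
    _ ≤ ∫⁻ s in Ioi 0, 3 * φ s :=
        setLIntegral_mono' measurableSet_Ioi fun s hs => tsum_indicator_Ioo_two_zpow_le φ hs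
    _ = 3 * ∫⁻ s in Ioi 0, φ s := lintegral_const_mul 3 hφ

theorem stmt10_general {n : ℕ} :
    ∃ C : ℝ, 0 < C ∧
      ∀ (F G : ℝ → (Fin n → ℝ) → ℂ),
        Measurable (Function.uncurry F) → Measurable (Function.uncurry G) →
        (∀ x : Fin n → ℝ, ∀ s > (0:ℝ), HasDerivAt (fun σ => F σ x) (G s x) s) →
        (∫⁻ s in Ioi (0:ℝ), (∫⁻ x, (‖G s x‖₊ : ℝ≥0∞) ^ 2) * ENNReal.ofReal s) < ⊤ →
        (∑' k : ℤ, ∫⁻ t in Ioo ((2:ℝ)^(k-1)) ((2:ℝ)^(k+2)),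
            (∫⁻ x, (‖F t x - F ((2:ℝ)^(k-1)) x‖₊ : ℝ≥0∞) ^ 2) / ENNReal.ofReal t)
          ≤ ENNReal.ofReal C *
            ∫⁻ s in Ioi (0:ℝ), (∫⁻ x, (‖G s x‖₊ : ℝ≥0∞) ^ 2) * ENNReal.ofReal s := by
  refine ⟨147, by norm_num, fun F G _ hG hF _ => ?_⟩
  have hGs : StronglyMeasurable (uncurry G) := hG.stronglyMeasurable
  have hwindow (k : ℤ) : (2 : ℝ) ^ (k + 2) = 8 * 2 ^ (k - 1) := by
    rw [show k + 2 = 3 + (k - 1) by ring, zpow_add₀ two_ne_zero]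
    norm_num
  calc _ ≤ ∑' k : ℤ, ENNReal.ofReal (8 - 1) ^ 2 *
          ∫⁻ s in Ioo ((2 : ℝ) ^ (k - 1)) (2 ^ (k + 2)), (∫⁻ x, ‖G s x‖ₑ ^ 2) * ENNReal.ofReal s :=
        ENNReal.tsum_le_tsum fun k => by
          rw [hwindow]
          exact setLIntegral_lintegral_enorm_sub_sq_div_le (by positivity) hGs
            fun x s hs => hF x s (lt_of_lt_of_le (by positivity) hs.1)
    _ = ENNReal.ofReal (8 - 1) ^ 2 * ∑' k : ℤ,
          ∫⁻ s in Ioo ((2 : ℝ) ^ (k - 1)) (2 ^ (k + 2)), (∫⁻ x, ‖G s x‖ₑ ^ 2) * ENNReal.ofReal s :=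
        ENNReal.tsum_mul_left
    _ ≤ ENNReal.ofReal (8 - 1) ^ 2 * (3 * ∫⁻ s in Ioi 0, (∫⁻ x, ‖G s x‖ₑ ^ 2) * ENNReal.ofReal s) := by
        gcongr
        exact tsum_setLIntegral_Ioo_two_zpow_le
          ((hGs.enorm.pow_const 2).lintegral_prod_right'.mul measurable_ofReal)
    _ = ENNReal.ofReal 147 * ∫⁻ s in Ioi 0, (∫⁻ x, ‖G s x‖ₑ ^ 2) * ENNReal.ofReal s := by
        rw [← mul_assoc, ← ofReal_pow (by norm_num), ← ofReal_ofNat 3, ← ofReal_mul (by norm_num)]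
        norm_num

/-- Discretization lemma: with `t_k = 2^{k−1}`,
`Σ_k ∫_{2^{k−1}}^{2^{k+2}} ‖F_t − F_{t_k}‖² dt/t ≤ C ∫₀^∞ ‖s ∂_s F_s‖² ds/s`. -/
theorem stmt10 {n : ℕ} (hn : 1 ≤ n) :
    ∃ C : ℝ, 0 < C ∧
      ∀ (F G : ℝ → (Fin n → ℝ) → ℂ),
        Measurable (Function.uncurry F) → Measurable (Function.uncurry G) →
        (∀ x : Fin n → ℝ, ∀ s > (0:ℝ), HasDerivAt (fun σ => F σ x) (G s x) s) →
        (∫⁻ s in Ioi (0:ℝ), (∫⁻ x, (‖G s x‖₊ : ℝ≥0∞) ^ 2) * ENNReal.ofReal s) < ⊤ →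
        (∑' k : ℤ, ∫⁻ t in Ioo ((2:ℝ)^(k-1)) ((2:ℝ)^(k+2)),
            (∫⁻ x, (‖F t x - F ((2:ℝ)^(k-1)) x‖₊ : ℝ≥0∞) ^ 2) / ENNReal.ofReal t)
          ≤ ENNReal.ofReal C *
            ∫⁻ s in Ioi (0:ℝ), (∫⁻ x, (‖G s x‖₊ : ℝ≥0∞) ^ 2) * ENNReal.ofReal s :=
  stmt10_general
end
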